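/- arXiv:1912.10584 — 4 statements merged into one kernel-verified Lean document; each statement's English description precedes it below -/
import Mathlib

section
/- Let R be a commutative noetherian ring and let {Φ_λ}_{λ ∈ Λ} be a family of n-coherent subsets of Spec R (for a fixed integer n ≥ 0). Then the intersection ⋂_λ Φ_λ is n-coherent. -/
/-- The set of associated primes, as a subset of the prime spectrum. -/
def assSet (R : Type) [CommRing R] (M : Type) [AddCommGroup M] [Module R M] :
    Set (PrimeSpectrum R) :=
  { p | p.asIdeal ∈ associatedPrimes R M }

/-- A subset of the prime spectrum is specialization-closed if it is stable under passing
to larger primes. -/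
def SpecializationClosed {R : Type} [CommRing R] (Φ : Set (PrimeSpectrum R)) : Prop :=
  ∀ p q : PrimeSpectrum R, p ∈ Φ → p.asIdeal ≤ q.asIdeal → q ∈ Φ

/-- A subset `Φ` of `Spec R` is `n`-coherent if for every exact sequence
`⋯ → I_1 → I_0 → C → 0` of `R`-modules with each `I_i` injective and `Ass I_i ⊆ Φ` for all
`0 ≤ i ≤ n`, one has `Ass C ⊆ Φ`. -/
def NCoherent (R : Type) [CommRing R] (n : ℕ) (Φ : Set (PrimeSpectrum R)) : Prop :=
  ∀ (I : ℕ → Type) (_ : ∀ i, AddCommGroup (I i)) (_ : ∀ i, Module R (I i))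
    (C : Type) (_ : AddCommGroup C) (_ : Module R C)
    (d : ∀ i, I (i + 1) →ₗ[R] I i) (ε : I 0 →ₗ[R] C),
    (∀ i, Module.Injective R (I i)) →
    (∀ i ≤ n, assSet R (I i) ⊆ Φ) →
    Function.Surjective ε →
    Function.Exact (d 0) ε →
    (∀ i, Function.Exact (d (i + 1)) (d i)) →
    assSet R C ⊆ Φ

theorem nCoherent_iInter_general (R : Type) [CommRing R] (n : ℕ)
    (Λ : Type) (Φ : Λ → Set (PrimeSpectrum R)) (hΦ : ∀ l, NCoherent R n (Φ l)) :
    NCoherent R n (⋂ l, Φ l) := by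
  intro I _ _ C _ _ d ε hinj hass hsurj hex0 hex
  refine Set.subset_iInter fun l => hΦ l I _ _ C _ _ d ε hinj ?_ hsurj hex0 hex
  exact fun i hi => (hass i hi).trans (Set.iInter_subset Φ l)

/-- An arbitrary intersection of `n`-coherent subsets of `Spec R` is `n`-coherent. -/
theorem nCoherent_iInter (R : Type) [CommRing R] [IsNoetherianRing R] (n : ℕ)
    (Λ : Type) (Φ : Λ → Set (PrimeSpectrum R)) (hΦ : ∀ l, NCoherent R n (Φ l)) :
    NCoherent R n (⋂ l, Φ l) :=
  nCoherent_iInter_general R n Λ Φ hΦ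
end

section
/- Let R be a commutative noetherian ring and n ≥ 0 an integer. A subset Φ of Spec R is n-coherent if and only if for every prime ideal p of R the set Φ_p = { P ∈ Spec R_p : P ∩ R ∈ Φ } is an n-coherent subset of Spec R_p. -/
/-!
Everything is compared with localization `W⁻¹(-)`, which is exact. An injective `W⁻¹R`-module
is injective over `R`, and over a noetherian ring localization preserves injectivity. A prime of
`W⁻¹R` is associated to `W⁻¹M` iff its contraction is associated to `M`, and every associated
prime of `M` missing `W` is such a contraction; for a `W⁻¹R`-module `M` this identifies `Ass_R M`
with the contraction of `Ass_{W⁻¹R} M`. So an `R_p`-resolution read over `R` keeps its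
associated primes in `Φ`, and conversely an associated prime `q` of `C` is the contraction of an
associated prime of `C_q`.
-/

open PrimeSpectrum

section Localization

variable {R : Type} [CommRing R] (W : Submonoid R) (S : Type) [CommRing S] [Algebra R S]
  [IsLocalization W S]

theorem disjoint_of_mem_assSet_of_isLocalization {M : Type} [AddCommGroup M] [Module R M]
    [Module S M] [IsScalarTower R S M] {q : PrimeSpectrum R} (hq : q ∈ assSet R M) :
    Disjoint (W : Set R) q.asIdeal := by
  obtain ⟨hprime, x, hx⟩ := hq
  refine Set.disjoint_left.mpr fun w hw hwq ↦ hprime.ne_top ?_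
  obtain ⟨k, hk⟩ := hx ▸ hwq
  have hx0 : x = 0 := by
    rw [Submodule.mem_colon_singleton, Submodule.mem_bot, ← algebraMap_smul S] at hk
    exact (IsLocalization.map_units S ⟨w ^ k, pow_mem hw k⟩).smul_eq_zero.mp hk
  rw [hx, hx0, Submodule.colon_singleton_zero, Ideal.radical_top]

variable {M M' : Type} [AddCommGroup M] [Module R M] [AddCommGroup M'] [Module R M']
  [Module S M'] [IsScalarTower R S M'] (f : M →ₗ[R] M') [IsLocalizedModule W f]

open Module.associatedPrimes in
include W f in
theorem comap_mem_assSet_of_isLocalizedModule [IsNoetherianRing R] {P : PrimeSpectrum S}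
    (hP : P ∈ assSet S M') : comap (algebraMap R S) P ∈ assSet R M :=
  comap_mem_associatedPrimes_of_mem_associatedPrimes_of_isLocalizedModule_of_fg W f _ hP
    (IsNoetherian.noetherian _)

open Module.associatedPrimes in
include f in
theorem exists_mem_assSet_comap_eq_of_isLocalizedModule {q : PrimeSpectrum R}
    (hq : q ∈ assSet R M) (hW : Disjoint (W : Set R) q.asIdeal) :
    ∃ Q ∈ assSet S M', comap (algebraMap R S) Q = q := by
  obtain ⟨Q, rfl⟩ : q ∈ Set.range (comap (algebraMap R S)) := by
    rwa [localization_comap_range S W]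
  exact ⟨Q,
    mem_associatedPrimes_of_comap_mem_associatedPrimes_of_isLocalizedModule W f _ hq, rfl⟩

include W in
theorem assSet_eq_image_comap_of_isLocalization [IsNoetherianRing R] :
    assSet R M' = comap (algebraMap R S) '' assSet S M' := by
  have := isLocalizedModule_id W M' S
  refine Set.Subset.antisymm (fun q hq ↦ ?_) ?_
  · exact exists_mem_assSet_comap_eq_of_isLocalizedModule W S LinearMap.id hq
      (disjoint_of_mem_assSet_of_isLocalization W S hq)
  · rintro _ ⟨P, hP, rfl⟩
    exact comap_mem_assSet_of_isLocalizedModule W S LinearMap.id hP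

include W in
theorem Module.injective_of_isLocalization [Module.Injective S M'] : Module.Injective R M' := by
  refine Module.Baer.injective fun I g ↦ ?_
  have := isLocalizedModule_id W M' S
  let J : Ideal S := I.localized' S W (Algebra.linearMap R S)
  let ι : I →ₗ[R] J := I.toLocalized' S W (Algebra.linearMap R S)
  let g' : J →ₗ[R] M' :=
    IsLocalizedModule.lift W ι g (IsLocalizedModule.map_units LinearMap.id)
  obtain ⟨h, hh⟩ := Module.Injective.out J.subtype J.injective_subtype
    (g'.extendScalarsOfIsLocalization W S)
  refine ⟨(h.restrictScalars R).comp (Algebra.linearMap R S), fun x hx ↦ ?_⟩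
  calc h (algebraMap R S x) = h (J.subtype (ι ⟨x, hx⟩)) := rfl
    _ = g' (ι ⟨x, hx⟩) := hh _
    _ = g ⟨x, hx⟩ := IsLocalizedModule.lift_apply W ι g _ _

include W in
theorem NCoherent.comap_of_isLocalization [IsNoetherianRing R] {n : ℕ}
    {Φ : Set (PrimeSpectrum R)} (hΦ : NCoherent R n Φ) :
    NCoherent S n (comap (algebraMap R S) ⁻¹' Φ) := by
  intro I _ _ C _ _ d ε hI hIΦ hε hexact₀ hexact
  let (i : ℕ) : Module R (I i) := Module.compHom (I i) (algebraMap R S)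
  have (i : ℕ) : IsScalarTower R S (I i) := .of_algebraMap_smul fun _ _ ↦ rfl
  let : Module R C := Module.compHom C (algebraMap R S)
  have : IsScalarTower R S C := .of_algebraMap_smul fun _ _ ↦ rfl
  have hCΦ : assSet R C ⊆ Φ :=
    hΦ I _ _ C _ _ (fun i ↦ (d i).restrictScalars R) (ε.restrictScalars R)
      (fun _ ↦ Module.injective_of_isLocalization W S)
      (fun i hi ↦ by
        rw [assSet_eq_image_comap_of_isLocalization W S, Set.image_subset_iff]
        exact hIΦ i hi)
      hε hexact₀ hexact
  rwa [assSet_eq_image_comap_of_isLocalization W S, Set.image_subset_iff] at hCΦ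

end Localization

theorem NCoherent.of_forall_atPrime {R : Type} [CommRing R] [IsNoetherianRing R] {n : ℕ}
    {Φ : Set (PrimeSpectrum R)}
    (hΦ : ∀ p : PrimeSpectrum R, NCoherent (Localization.AtPrime p.asIdeal) n
      (comap (algebraMap R (Localization.AtPrime p.asIdeal)) ⁻¹' Φ)) :
    NCoherent R n Φ := by
  intro I _ _ C _ _ d ε hI hIΦ hε hexact₀ hexact q hq
  let W := q.asIdeal.primeCompl
  obtain ⟨Q, hQ, hQq⟩ := exists_mem_assSet_comap_eq_of_isLocalizedModule W
    (Localization.AtPrime q.asIdeal) (LocalizedModule.mkLinearMap W C) hq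
    (Set.disjoint_left.mpr fun _ hr ↦ hr)
  refine hQq ▸ hΦ q (fun i ↦ LocalizedModule W (I i)) _ _ (LocalizedModule W C) _ _
    (fun i ↦ LocalizedModule.map W (d i)) (LocalizedModule.map W ε)
    (fun i ↦ Module.injective_of_isLocalizedModule W (LocalizedModule.mkLinearMap W (I i)))
    (fun i hi _ hP ↦ hIΦ i hi
      (comap_mem_assSet_of_isLocalizedModule W _ (LocalizedModule.mkLinearMap W (I i)) hP))
    (LocalizedModule.map_surjective W ε hε) (LocalizedModule.map_exact W _ _ hexact₀)
    (fun i ↦ LocalizedModule.map_exact W _ _ (hexact i)) hQ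

/-- A subset `Φ ⊆ Spec R` is `n`-coherent if and only if for every prime `p` the subset
`Φ_p = { P ∈ Spec R_p : P ∩ R ∈ Φ }` of `Spec R_p` is `n`-coherent. -/
theorem nCoherent_iff_forall_localization (R : Type) [CommRing R] [IsNoetherianRing R]
    (n : ℕ) (Φ : Set (PrimeSpectrum R)) :
    NCoherent R n Φ ↔
      ∀ p : PrimeSpectrum R,
        NCoherent (Localization.AtPrime p.asIdeal) n
          { P : PrimeSpectrum (Localization.AtPrime p.asIdeal) |
              PrimeSpectrum.comap (algebraMap R (Localization.AtPrime p.asIdeal)) P ∈ Φ } :=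
  ⟨fun hΦ p ↦ hΦ.comap_of_isLocalization p.asIdeal.primeCompl _,
    NCoherent.of_forall_atPrime⟩
end

section
/- Let R be a commutative noetherian ring, Φ a subset of Spec R, and 0 → L → M → N → 0 an exact sequence of R-modules. Fix n ≥ 0 and let C^n_Φ denote the class of modules X admitting an exact sequence 0 → X → I^0 → ⋯ → I^n with each I^i injective and Ass(I^i) ⊆ Φ. Then: (i) if L, N ∈ C^n_Φ then M ∈ C^n_Φ; (ii) if M ∈ C^n_Φ and N ∈ C^{n-1}_Φ then L ∈ C^n_Φ. -/
/-- Membership in the class `C^n_Φ`: an `R`-module `X` belongs to `C^n_Φ` if there is an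
exact sequence `0 → X → I^0 → I^1 → ⋯ → I^n` with every `I^i` (for `0 ≤ i ≤ n`) injective
and with associated primes contained in `Φ`. -/
def CMem (R : Type) [CommRing R] (Φ : Set (PrimeSpectrum R)) (n : ℕ)
    (M : Type) [AddCommGroup M] [Module R M] : Prop :=
  ∃ (I : ℕ → Type) (_ : ∀ i, AddCommGroup (I i)) (_ : ∀ i, Module R (I i))
    (d : ∀ i, I i →ₗ[R] I (i + 1)) (ε : M →ₗ[R] I 0),
    Function.Injective ε ∧
    (0 < n → Function.Exact ε (d 0)) ∧
    (∀ i, i + 2 ≤ n → Function.Exact (d i) (d (i + 1))) ∧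
    (∀ i ≤ n, Module.Injective R (I i)) ∧
    (∀ i ≤ n, assSet R (I i) ⊆ Φ)

/-! Both parts are proved by peeling off the first injective term: `X ∈ C^{n+1}_Φ` iff `X` embeds
into an injective `E` with `Ass E ⊆ Φ` whose cokernel lies in `C^n_Φ`. For (i), the horseshoe
construction embeds `M` into `E_L × E_N` (extend `L → E_L` along `f`, using that `E_L` is injective);
`Ass (E_L × E_N) = Ass E_L ∪ Ass E_N`, and the three cokernels again form a short exact sequence, so
induction on `n` applies. For (ii), embed `L` into `E` through `M ↪ E`; then
`0 → N → E/L → E/M → 0` is exact and (i) puts `E/L` in `C^n_Φ`. -/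

open Function LinearMap Submodule

universe u v

instance Module.Injective.prod {R : Type u} [Ring R] [Small.{v} R] {A B : Type v}
    [AddCommGroup A] [Module R A] [AddCommGroup B] [Module R B]
    [Module.Injective R A] [Module.Injective R B] : Module.Injective R (A × B) where
  out X Y _ _ _ _ i hi φ := by
    obtain ⟨φA, hφA⟩ := Module.Injective.extension_property R A X Y i hi (fst R A B ∘ₗ φ)
    obtain ⟨φB, hφB⟩ := Module.Injective.extension_property R B X Y i hi (snd R A B ∘ₗ φ)
    exact ⟨φA.prod φB, fun x => Prod.ext (congr($hφA x)) (congr($hφB x))⟩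

section ExactDiagram

variable {R : Type*} [Ring R] {L M N A B C : Type*}
  [AddCommGroup L] [Module R L] [AddCommGroup M] [Module R M] [AddCommGroup N] [Module R N]
  [AddCommGroup A] [Module R A] [AddCommGroup B] [Module R B] [AddCommGroup C] [Module R C]
  {f : L →ₗ[R] M} {g : M →ₗ[R] N} {u : A →ₗ[R] B} {v : B →ₗ[R] C}
  {α : L →ₗ[R] A} {β : M →ₗ[R] B} {γ : N →ₗ[R] C}

theorem injective_of_exact_of_injective_of_injective (hfg : Exact f g) (hu : Injective u)
    (hα : Injective α) (hγ : Injective γ) (hαβ : β ∘ₗ f = u ∘ₗ α) (hβγ : γ ∘ₗ g = v ∘ₗ β) :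
    Injective β := by
  refine (injective_iff_map_eq_zero β).2 fun m hm => ?_
  have hgm : g m = 0 := hγ <| by simpa [hm] using LinearMap.congr_fun hβγ m
  obtain ⟨l, rfl⟩ := (hfg m).1 hgm
  have hαl : α l = 0 := hu <| by simpa [hm] using (LinearMap.congr_fun hαβ l).symm
  rw [hα (hαl.trans (map_zero α).symm), map_zero]

theorem range_le_comap_range_of_comp_eq (hαβ : β ∘ₗ f = u ∘ₗ α) :
    range α ≤ (range β).comap u :=
  map_le_iff_le_comap.1 <| by rw [← range_comp, ← hαβ]; exact range_comp_le_range f β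

/- For a map of short exact sequences `(α, β, γ)` with `γ` injective, the cokernels form a short
exact sequence (the tail of the snake lemma). -/
theorem injective_mapQ_range (hfg : Exact f g) (huv : Exact u v) (hu : Injective u)
    (hγ : Injective γ) (hαβ : β ∘ₗ f = u ∘ₗ α) (hβγ : γ ∘ₗ g = v ∘ₗ β) :
    Injective ((range α).mapQ (range β) u (range_le_comap_range_of_comp_eq hαβ)) := by
  rw [← ker_eq_bot, ker_mapQ, ← le_bot_iff, map_le_iff_le_comap, comap_bot, ker_mkQ]
  rintro a ⟨m, hm⟩
  have hgm : g m = 0 := hγ <| by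
    simpa [hm, huv.apply_apply_eq_zero] using LinearMap.congr_fun hβγ m
  obtain ⟨l, rfl⟩ := (hfg m).1 hgm
  exact ⟨l, hu <| by simpa [hm] using (LinearMap.congr_fun hαβ l).symm⟩

theorem exact_mapQ_range (hg : Surjective g) (huv : Exact u v)
    (hαβ : β ∘ₗ f = u ∘ₗ α) (hβγ : γ ∘ₗ g = v ∘ₗ β) :
    Exact ((range α).mapQ (range β) u (range_le_comap_range_of_comp_eq hαβ))
      ((range β).mapQ (range γ) v (range_le_comap_range_of_comp_eq hβγ)) := by
  rw [huv.exact_mapQ_iff, ← range_comp, ← hβγ, range_comp_of_range_eq_top _ (range_eq_top.2 hg)]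
  exact inf_le_right

theorem Submodule.mapQ_surjective {p : Submodule R B} {q : Submodule R C} (hv : Surjective v)
    (h : p ≤ q.comap v) : Surjective (p.mapQ q v h) := by
  rw [← range_eq_top, range_mapQ, range_eq_top.2 hv, Submodule.map_top, range_mkQ]

/- The tail `0 → coker f → coker (φ ∘ f) → coker φ → 0` of the kernel-cokernel sequence of a
composite with `φ` injective. -/
theorem injective_mapQ_range_comp {φ : M →ₗ[R] B} (hφ : Injective φ) :
    Injective ((range f).mapQ (range (φ ∘ₗ f)) φ (map_le_iff_le_comap.1 (range_comp f φ).ge)) := by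
  rw [← ker_eq_bot, ker_mapQ, range_comp, comap_map_eq_of_injective hφ, mkQ_map_self]

theorem exact_mapQ_range_comp_factor (φ : M →ₗ[R] B) :
    Exact ((range f).mapQ (range (φ ∘ₗ f)) φ (map_le_iff_le_comap.1 (range_comp f φ).ge))
      (factor (range_comp_le_range f φ)) := by
  rw [exact_iff]
  simp [factor, ker_mapQ, range_mapQ]

end ExactDiagram

theorem exists_horseshoe {R : Type u} [Ring R] [Small.{v} R] {L M N : Type*} {EL EN : Type v}
    [AddCommGroup L] [Module R L] [AddCommGroup M] [Module R M] [AddCommGroup N] [Module R N]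
    [AddCommGroup EL] [Module R EL] [AddCommGroup EN] [Module R EN] [Module.Injective R EL]
    {f : L →ₗ[R] M} {g : M →ₗ[R] N} (hf : Injective f) (hfg : Exact f g)
    {εL : L →ₗ[R] EL} {εN : N →ₗ[R] EN} (hεL : Injective εL) (hεN : Injective εN) :
    ∃ μ : M →ₗ[R] EL × EN, Injective μ ∧ μ ∘ₗ f = inl R EL EN ∘ₗ εL ∧
      εN ∘ₗ g = snd R EL EN ∘ₗ μ := by
  obtain ⟨h, hhf⟩ := Module.Injective.extension_property R EL L M f hf εL
  have hμf : h.prod (εN ∘ₗ g) ∘ₗ f = inl R EL EN ∘ₗ εL := by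
    ext l
    · exact congr($hhf l)
    · simp [hfg.apply_apply_eq_zero]
  exact ⟨h.prod (εN ∘ₗ g), injective_of_exact_of_injective_of_injective hfg
    inl_injective hεL hεN hμf (snd_prod _ _).symm, hμf, (snd_prod _ _).symm⟩

def IsInjectiveIn (R : Type) [CommRing R] (Φ : Set (PrimeSpectrum R)) (E : Type)
    [AddCommGroup E] [Module R E] : Prop :=
  Module.Injective R E ∧ assSet R E ⊆ Φ

theorem IsInjectiveIn.prod {R : Type} [CommRing R] {Φ : Set (PrimeSpectrum R)} {A B : Type}
    [AddCommGroup A] [Module R A] [AddCommGroup B] [Module R B]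
    (hA : IsInjectiveIn R Φ A) (hB : IsInjectiveIn R Φ B) : IsInjectiveIn R Φ (A × B) := by
  have := hA.1
  have := hB.1
  refine ⟨inferInstance, fun p hp => ?_⟩
  rcases (associatedPrimes.prod R A B).subset hp with h | h
  exacts [hA.2 h, hB.2 h]

def consFam (E : Type) (I : ℕ → Type) : ℕ → Type
  | 0 => E
  | k + 1 => I k

instance consFam.instAddCommGroup (E : Type) (I : ℕ → Type) [AddCommGroup E]
    [∀ i, AddCommGroup (I i)] : ∀ i, AddCommGroup (consFam E I i)
  | 0 => inferInstanceAs (AddCommGroup E)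
  | k + 1 => inferInstanceAs (AddCommGroup (I k))

instance consFam.instModule (R : Type) [Ring R] (E : Type) (I : ℕ → Type) [AddCommGroup E]
    [Module R E] [∀ i, AddCommGroup (I i)] [∀ i, Module R (I i)] :
    ∀ i, Module R (consFam E I i)
  | 0 => inferInstanceAs (Module R E)
  | k + 1 => inferInstanceAs (Module R (I k))

def consMap {R : Type} [Ring R] {E : Type} {I : ℕ → Type} [AddCommGroup E] [Module R E]
    [∀ i, AddCommGroup (I i)] [∀ i, Module R (I i)]
    (d₀ : E →ₗ[R] I 0) (d : ∀ k, I k →ₗ[R] I (k + 1)) :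
    ∀ i, consFam E I i →ₗ[R] consFam E I (i + 1)
  | 0 => d₀
  | k + 1 => d k

section CMem

variable {R : Type} [CommRing R] {Φ : Set (PrimeSpectrum R)} {n : ℕ}
  {X : Type} [AddCommGroup X] [Module R X]

theorem cMem_zero_iff :
    CMem R Φ 0 X ↔ ∃ (E : Type) (_ : AddCommGroup E) (_ : Module R E) (ε : X →ₗ[R] E),
      Injective ε ∧ IsInjectiveIn R Φ E := by
  constructor
  · rintro ⟨I, _, _, -, ε, hε, -, -, hI, hass⟩
    exact ⟨I 0, _, _, ε, hε, hI 0 le_rfl, hass 0 le_rfl⟩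
  · rintro ⟨E, _, _, ε, hε, hE⟩
    exact ⟨fun _ => E, fun _ => _, fun _ => _, fun _ => 0, ε, hε, by simp, by simp,
      fun _ _ => hE.1, fun _ _ => hE.2⟩

theorem cMem_succ_of_exact {E Q : Type} [AddCommGroup E] [Module R E] [AddCommGroup Q]
    [Module R Q] {ε : X →ₗ[R] E} {π : E →ₗ[R] Q} (hε : Injective ε) (hεπ : Exact ε π)
    (hπ : Surjective π) (hE : IsInjectiveIn R Φ E) (hQ : CMem R Φ n Q) :
    CMem R Φ (n + 1) X := by
  obtain ⟨I, _, _, d, ε', hε', hex₀, hex, hI, hass⟩ := hQ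
  refine ⟨consFam E I, fun _ => inferInstance, fun _ => inferInstance, consMap (ε' ∘ₗ π) d, ε, hε,
    fun _ => show Exact ε (ε' ∘ₗ π) from hε'.comp_exact_iff_exact.2 hεπ, ?_, ?_, ?_⟩
  · rintro (_ | k) hk
    exacts [show Exact (ε' ∘ₗ π) (d 0) from hπ.comp_exact_iff_exact.2 (hex₀ (by omega)),
      hex k (by omega)]
  · rintro (_ | k) hk
    exacts [hE.1, hI k (by omega)]
  · rintro (_ | k) hk
    exacts [hE.2, hass k (by omega)]

theorem exists_of_cMem_succ (hX : CMem R Φ (n + 1) X) :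
    ∃ (E : Type) (_ : AddCommGroup E) (_ : Module R E) (ε : X →ₗ[R] E),
      Injective ε ∧ IsInjectiveIn R Φ E ∧ CMem R Φ n (E ⧸ range ε) := by
  obtain ⟨I, _, _, d, ε, hε, hex₀, hex, hI, hass⟩ := hX
  have hεd : Exact ε (d 0) := hex₀ (by omega)
  refine ⟨I 0, _, _, ε, hε, ⟨hI 0 (by omega), hass 0 (by omega)⟩, fun i => I (i + 1),
    fun _ => inferInstance, fun _ => inferInstance, fun i => d (i + 1),
    (range ε).liftQ (d 0) hεd.linearMap_ker_eq.ge, injective_range_liftQ_of_exact hεd, fun _ => ?_,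
    fun i hi => hex (i + 1) (by omega), fun i hi => hI (i + 1) (by omega),
    fun i hi => hass (i + 1) (by omega)⟩
  rw [exact_iff, range_liftQ]
  exact exact_iff.1 (hex 0 (by omega))

theorem cMem_of_linearEquiv {Y : Type} [AddCommGroup Y] [Module R Y] (e : X ≃ₗ[R] Y)
    (hX : CMem R Φ n X) : CMem R Φ n Y := by
  obtain ⟨I, _, _, d, ε, hε, hex₀, hex, hI, hass⟩ := hX
  exact ⟨I, _, _, d, ε ∘ₗ e.symm, hε.comp e.symm.injective,
    fun hn => e.symm.precomp_exact_iff_exact.2 (hex₀ hn), hex, hI, hass⟩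

variable {L M N : Type} [AddCommGroup L] [Module R L] [AddCommGroup M] [Module R M]
  [AddCommGroup N] [Module R N] {f : L →ₗ[R] M} {g : M →ₗ[R] N}

theorem cMem_middle_of_exact (hf : Injective f) (hg : Surjective g) (hfg : Exact f g)
    (hL : CMem R Φ n L) (hN : CMem R Φ n N) : CMem R Φ n M := by
  induction n generalizing L M N with
  | zero =>
    obtain ⟨EL, _, _, εL, hεL, hEL⟩ := cMem_zero_iff.1 hL
    obtain ⟨EN, _, _, εN, hεN, hEN⟩ := cMem_zero_iff.1 hN
    have := hEL.1
    obtain ⟨μ, hμ, -, -⟩ := exists_horseshoe hf hfg hεL hεN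
    exact cMem_zero_iff.2 ⟨EL × EN, _, _, μ, hμ, hEL.prod hEN⟩
  | succ k ih =>
    obtain ⟨EL, _, _, εL, hεL, hEL, hQL⟩ := exists_of_cMem_succ hL
    obtain ⟨EN, _, _, εN, hεN, hEN, hQN⟩ := exists_of_cMem_succ hN
    have := hEL.1
    obtain ⟨μ, hμ, hμf, hgμ⟩ := exists_horseshoe hf hfg hεL hεN
    refine cMem_succ_of_exact hμ (exact_map_mkQ_range μ) (mkQ_surjective _) (hEL.prod hEN) ?_
    exact ih (injective_mapQ_range hfg .inl_snd inl_injective hεN hμf hgμ)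
      (Submodule.mapQ_surjective snd_surjective _) (exact_mapQ_range hg .inl_snd hμf hgμ) hQL hQN

theorem cMem_zero_of_injective (hf : Injective f) (hM : CMem R Φ 0 M) : CMem R Φ 0 L := by
  obtain ⟨E, _, _, ε, hε, hE⟩ := cMem_zero_iff.1 hM
  exact cMem_zero_iff.2 ⟨E, _, _, ε ∘ₗ f, hε.comp hf, hE⟩

theorem cMem_succ_left_of_exact (hf : Injective f) (hg : Surjective g) (hfg : Exact f g)
    (hM : CMem R Φ (n + 1) M) (hN : CMem R Φ n N) : CMem R Φ (n + 1) L := by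
  obtain ⟨E, _, _, ε, hε, hE, hQ⟩ := exists_of_cMem_succ hM
  refine cMem_succ_of_exact (hε.comp hf) (exact_map_mkQ_range (ε ∘ₗ f)) (mkQ_surjective _) hE ?_
  exact cMem_middle_of_exact (injective_mapQ_range_comp hε) (factor_surjective _)
    (exact_mapQ_range_comp_factor ε) (cMem_of_linearEquiv (hfg.linearEquivOfSurjective hg).symm hN)
    hQ

end CMem

theorem cMem_of_shortExact_general (R : Type) [CommRing R]
    (Φ : Set (PrimeSpectrum R)) (n : ℕ)
    (L M N : Type) [AddCommGroup L] [Module R L] [AddCommGroup M] [Module R M]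
    [AddCommGroup N] [Module R N]
    (f : L →ₗ[R] M) (g : M →ₗ[R] N)
    (hf : Function.Injective f) (hg : Function.Surjective g)
    (hfg : Function.Exact f g) :
    (CMem R Φ n L → CMem R Φ n N → CMem R Φ n M) ∧
    (CMem R Φ n M → (0 < n → CMem R Φ (n - 1) N) → CMem R Φ n L) := by
  refine ⟨cMem_middle_of_exact hf hg hfg, fun hM hN => ?_⟩
  cases n with
  | zero => exact cMem_zero_of_injective hf hM
  | succ k => exact cMem_succ_left_of_exact hf hg hfg hM (hN k.succ_pos)

/-- For a short exact sequence `0 → L → M → N → 0`: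
(i) if `L, N ∈ C^n_Φ` then `M ∈ C^n_Φ`;
(ii) if `M ∈ C^n_Φ` and `N ∈ C^{n-1}_Φ` (no condition when `n = 0`, as `C^{-1}_Φ` is all
of `Mod R`) then `L ∈ C^n_Φ`. -/
theorem cMem_of_shortExact (R : Type) [CommRing R] [IsNoetherianRing R]
    (Φ : Set (PrimeSpectrum R)) (n : ℕ)
    (L M N : Type) [AddCommGroup L] [Module R L] [AddCommGroup M] [Module R M]
    [AddCommGroup N] [Module R N]
    (f : L →ₗ[R] M) (g : M →ₗ[R] N)
    (hf : Function.Injective f) (hg : Function.Surjective g)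
    (hfg : Function.Exact f g) :
    (CMem R Φ n L → CMem R Φ n N → CMem R Φ n M) ∧
    (CMem R Φ n M → (0 < n → CMem R Φ (n - 1) N) → CMem R Φ n L) :=
  cMem_of_shortExact_general R Φ n L M N f g hf hg hfg
end

section
/- Let R be a commutative noetherian ring and Φ ⊆ Spec R a subset that is both specialization-closed and generalization-closed. Then Φ is clopen in Spec R with the Zariski topology; in particular, the set of minimal elements of Φ is finite and Φ is a finite union of closed sets V(p) over minimal primes p of R lying in Φ. -/
/-- A subset of the prime spectrum is generalization-closed if it is stable under passing
to smaller primes. -/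
def GeneralizationClosed {R : Type} [CommRing R] (Φ : Set (PrimeSpectrum R)) : Prop :=
  ∀ p q : PrimeSpectrum R, q ∈ Φ → p.asIdeal ≤ q.asIdeal → p ∈ Φ

/-!
Every prime contains a minimal prime, so a generalization-closed set `Φ` has as minimal elements
exactly the minimal primes of `R` lying in `Φ`; being specialization-closed as well, `Φ` is the
union of the closed sets `V(p)` over them. A noetherian ring has only finitely many minimal primes,
so this union is finite and `Φ` is closed. The complement of `Φ` is again closed under both
operations, hence closed too.
-/

namespace PrimeSpectrum

variable {R : Type} [CommRing R]

def minimalElements (Φ : Set (PrimeSpectrum R)) : Set (PrimeSpectrum R) :=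
  { p ∈ Φ | ∀ q ∈ Φ, q.asIdeal ≤ p.asIdeal → q = p }

theorem exists_minimalPrimes_le (p : PrimeSpectrum R) :
    ∃ q : PrimeSpectrum R, q.asIdeal ∈ minimalPrimes R ∧ q.asIdeal ≤ p.asIdeal :=
  have ⟨q, hq, hqp⟩ := Ideal.exists_minimalPrimes_le (bot_le : ⊥ ≤ p.asIdeal)
  ⟨⟨q, hq.1.1⟩, hq, hqp⟩

theorem mem_minimalElements_of_mem_minimalPrimes {Φ : Set (PrimeSpectrum R)} {p : PrimeSpectrum R}
    (hpΦ : p ∈ Φ) (hp : p.asIdeal ∈ minimalPrimes R) : p ∈ minimalElements Φ :=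
  ⟨hpΦ, fun q _ hqp ↦ PrimeSpectrum.ext (le_antisymm hqp (hp.2 ⟨q.2, bot_le⟩ hqp))⟩

end PrimeSpectrum

open PrimeSpectrum

namespace GeneralizationClosed

variable {R : Type} [CommRing R] {Φ : Set (PrimeSpectrum R)}

theorem compl (h : GeneralizationClosed Φ) : SpecializationClosed Φᶜ :=
  fun p q hp hpq hq ↦ hp (h p q hq hpq)

theorem asIdeal_mem_minimalPrimes (h : GeneralizationClosed Φ) {p : PrimeSpectrum R}
    (hp : p ∈ minimalElements Φ) : p.asIdeal ∈ minimalPrimes R := by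
  obtain ⟨q, hq, hqp⟩ := exists_minimalPrimes_le p
  rwa [← hp.2 q (h q p hp.1 hqp) hqp]

theorem minimalElements_finite [IsNoetherianRing R] (h : GeneralizationClosed Φ) :
    (minimalElements Φ).Finite :=
  ((minimalPrimes.finite_of_isNoetherianRing R).preimage
    (fun _ _ _ _ ↦ PrimeSpectrum.ext)).subset fun _ ↦ h.asIdeal_mem_minimalPrimes

end GeneralizationClosed

namespace SpecializationClosed

variable {R : Type} [CommRing R] {Φ : Set (PrimeSpectrum R)}

theorem compl (h : SpecializationClosed Φ) : GeneralizationClosed Φᶜ :=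
  fun p q hq hpq hp ↦ hq (h p q hp hpq)

theorem eq_biUnion_zeroLocus_minimalElements (h₁ : SpecializationClosed Φ)
    (h₂ : GeneralizationClosed Φ) :
    Φ = ⋃ p ∈ minimalElements Φ, zeroLocus (p.asIdeal : Set R) := by
  ext r
  simp only [Set.mem_iUnion, mem_zeroLocus, SetLike.coe_subset_coe, exists_prop]
  constructor
  · intro hr
    obtain ⟨q, hq, hqr⟩ := exists_minimalPrimes_le r
    exact ⟨q, mem_minimalElements_of_mem_minimalPrimes (h₂ q r hr hqr) hq, hqr⟩
  · rintro ⟨p, hp, hpr⟩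
    exact h₁ p r hp.1 hpr

theorem isClosed [IsNoetherianRing R] (h₁ : SpecializationClosed Φ)
    (h₂ : GeneralizationClosed Φ) : IsClosed Φ := by
  rw [h₁.eq_biUnion_zeroLocus_minimalElements h₂]
  exact h₂.minimalElements_finite.isClosed_biUnion fun p _ ↦ isClosed_zeroLocus _

end SpecializationClosed

/-- A subset of `Spec R` (`R` noetherian) that is both specialization-closed and
generalization-closed is clopen; in particular its set of minimal elements is finite,
consists of minimal primes of `R`, and `Φ` is the (finite) union of the `V(p)` over the
minimal elements `p` of `Φ`. -/
theorem clopen_of_specialization_and_generalization_closed (R : Type) [CommRing R]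
    [IsNoetherianRing R] (Φ : Set (PrimeSpectrum R))
    (h1 : SpecializationClosed Φ) (h2 : GeneralizationClosed Φ) :
    IsClopen Φ ∧
      { p ∈ Φ | ∀ q ∈ Φ, q.asIdeal ≤ p.asIdeal → q = p }.Finite ∧
      (∀ p ∈ { p ∈ Φ | ∀ q ∈ Φ, q.asIdeal ≤ p.asIdeal → q = p },
        p.asIdeal ∈ minimalPrimes R) ∧
      Φ = ⋃ p ∈ { p ∈ Φ | ∀ q ∈ Φ, q.asIdeal ≤ p.asIdeal → q = p },
            PrimeSpectrum.zeroLocus (p.asIdeal : Set R) :=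
  ⟨⟨h1.isClosed h2, isClosed_compl_iff.mp (h2.compl.isClosed h1.compl)⟩,
    h2.minimalElements_finite, fun _ ↦ h2.asIdeal_mem_minimalPrimes,
    h1.eq_biUnion_zeroLocus_minimalElements h2⟩
end
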